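/- arXiv:0806.3256 — 3 statements merged into one kernel-verified Lean document; each statement's English description precedes it below -/
import Mathlib

section
/- Strong duality for Gale dual polarized arrangements: let 𝒱 = (V, η, ξ) be a polarized arrangement indexed by the finite set I, with Gale dual 𝒱^∨. Then ℱ^∨ = ℬ and ℬ^∨ = ℱ, and consequently 𝒫^∨ = 𝒫; that is, a sign vector α ∈ {+1,−1}^I is feasible for 𝒱^∨ if and only if it is bounded for 𝒱, is bounded for 𝒱^∨ if and only if it is feasible for 𝒱, and is bounded feasible for 𝒱^∨ if and only if it is bounded feasible for 𝒱. -/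
open Finset

variable {I : Type*} [Fintype I]

/-- The standard dot product on `I → ℝ`. -/
def dot (x y : I → ℝ) : ℝ := ∑ i, x i * y i

/-- The orthogonal complement of a subspace of `I → ℝ` with respect to the standard
inner product. -/
def perp (V : Submodule ℝ (I → ℝ)) : Submodule ℝ (I → ℝ) where
  carrier := {x | ∀ v ∈ V, dot x v = 0}
  zero_mem' := fun v _ => by simp [dot]
  add_mem' := fun {a b} ha hb v hv => by
    have h : dot (a + b) v = dot a v + dot b v := by
      simp [dot, add_mul, Finset.sum_add_distrib]
    rw [h, ha v hv, hb v hv, add_zero]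
  smul_mem' := fun c {a} ha v hv => by
    have h : dot (c • a) v = c * dot a v := by
      simp [dot, Finset.mul_sum, mul_assoc]
    rw [h, ha v hv, mul_zero]

/-- A sign vector: a function `I → ℝ` all of whose values are `+1` or `-1`. -/
def IsSign (α : I → ℝ) : Prop := ∀ i, α i = 1 ∨ α i = -1

/-- A polarized arrangement `(V, η, ξ)`, where `η ∈ ℝ^I/V` is recorded by an arbitrary
lift `η : I → ℝ` and the covector `ξ ∈ V*` is recorded by an arbitrary vector `ξ : I → ℝ`
with `ξ(v) = ⟨ξ, v⟩` for `v ∈ V`.  Condition (a): every lift of `η` has at least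
`|I| - dim V` nonzero coordinates; condition (b): every representative of `ξ` has at
least `dim V` nonzero coordinates. -/
structure PolArr (I : Type*) [Fintype I] where
  V : Submodule ℝ (I → ℝ)
  η : I → ℝ
  ξ : I → ℝ
  cond_a : ∀ x : I → ℝ, x - η ∈ V →
    Fintype.card I - Module.finrank ℝ V ≤ Set.ncard {i | x i ≠ 0}
  cond_b : ∀ x : I → ℝ, x - ξ ∈ perp V →
    Module.finrank ℝ V ≤ Set.ncard {i | x i ≠ 0}

/-- The chamber `Δ_α ⊆ V_η` determined by a sign vector `α`. -/
def Delta (V : Submodule ℝ (I → ℝ)) (η α : I → ℝ) : Set (I → ℝ) :=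
  {x | x - η ∈ V ∧ ∀ i, 0 ≤ α i * x i}

/-- The cone `Σ_α ⊆ V` determined by a sign vector `α`. -/
def SigCone (V : Submodule ℝ (I → ℝ)) (α : I → ℝ) : Set (I → ℝ) :=
  {x | x ∈ V ∧ ∀ i, 0 ≤ α i * x i}

/-- `α` is feasible if `Δ_α ≠ ∅`. -/
def Feasible (V : Submodule ℝ (I → ℝ)) (η α : I → ℝ) : Prop := (Delta V η α).Nonempty

/-- `α` is bounded if `ξ(Σ_α)` is bounded above. -/
def Bounded (V : Submodule ℝ (I → ℝ)) (ξ α : I → ℝ) : Prop :=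
  BddAbove (dot ξ '' SigCone V α)

/-- The flat `H_S = {x ∈ V_η : x_i = 0 for all i ∈ S}`. -/
def Flat (V : Submodule ℝ (I → ℝ)) (η : I → ℝ) (S : Set I) : Set (I → ℝ) :=
  {x | x - η ∈ V ∧ ∀ i ∈ S, x i = 0}

/-- A basis: a subset `b ⊆ I` with `|b| = dim V` and `H_b ≠ ∅`. -/
def IsBasisSet (V : Submodule ℝ (I → ℝ)) (η : I → ℝ) (b : Finset I) : Prop :=
  b.card = Module.finrank ℝ V ∧ (Flat V η ↑b).Nonempty

/-- `ξ` attains its maximum on `Δ_α` exactly at the point `H_b`. -/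
def OptAt (V : Submodule ℝ (I → ℝ)) (η ξ : I → ℝ) (b : Finset I) (α : I → ℝ) : Prop :=
  ∃ p ∈ Flat V η ↑b, p ∈ Delta V η α ∧ ∀ x ∈ Delta V η α, x ≠ p → dot ξ (x - p) < 0

/-- `α = μ(b)`: the bounded feasible sign vector on whose chamber `ξ` is maximized
exactly at `H_b`. -/
def MuSpec (V : Submodule ℝ (I → ℝ)) (η ξ : I → ℝ) (b : Finset I) (α : I → ℝ) : Prop :=
  Feasible V η α ∧ Bounded V ξ α ∧ OptAt V η ξ b α

/-- The coordinate subspace of vectors vanishing on `S`. -/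
def zeroOn (S : Set I) : Submodule ℝ (I → ℝ) where
  carrier := {x | ∀ i ∈ S, x i = 0}
  zero_mem' := fun i _ => rfl
  add_mem' := fun {a b} ha hb i hi => by simp [Pi.add_apply, ha i hi, hb i hi]
  smul_mem' := fun c {a} ha i hi => by simp [Pi.smul_apply, ha i hi]


open scoped InnerProductSpace

open scoped InnerProductSpace

section ConeGen

variable {J : Type*} [Fintype J] {H : Type*} [NormedAddCommGroup H] [NormedSpace ℝ H]

/-- The cone generated by a finite family of vectors. -/
def coneGen (g : J → H) : Set H :=
  {x | ∃ c : J → ℝ, (∀ j, 0 ≤ c j) ∧ x = ∑ j, c j • g j}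

lemma coneGen_zero (g : J → H) : (0 : H) ∈ coneGen g :=
  ⟨0, fun _ => le_rfl, by simp⟩

lemma coneGen_gen (g : J → H) (j : J) : g j ∈ coneGen g := by
  classical
  refine ⟨fun j' => if j' = j then 1 else 0, fun j' => by positivity, ?_⟩
  simp [ite_smul]

lemma coneGen_add (g : J → H) {x y : H} (hx : x ∈ coneGen g) (hy : y ∈ coneGen g) :
    x + y ∈ coneGen g := by
  obtain ⟨c, hc, rfl⟩ := hx
  obtain ⟨d, hd, rfl⟩ := hy
  exact ⟨c + d, fun j => add_nonneg (hc j) (hd j), by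
    simp [add_smul, Finset.sum_add_distrib]⟩

lemma coneGen_smul (g : J → H) {t : ℝ} (ht : 0 ≤ t) {x : H} (hx : x ∈ coneGen g) :
    t • x ∈ coneGen g := by
  obtain ⟨c, hc, rfl⟩ := hx
  refine ⟨fun j => t * c j, fun j => mul_nonneg ht (hc j), ?_⟩
  rw [Finset.smul_sum]
  exact Finset.sum_congr rfl fun j _ => by simp [smul_smul]

lemma shrink_support (g : J → H) (c E : J → ℝ) (hc : ∀ j, 0 ≤ c j)
    (hE : ∑ j, E j • g j = 0) (hsupp : ∀ j, E j ≠ 0 → c j ≠ 0)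
    (hex : ∃ j, 0 < E j) :
    ∃ d : J → ℝ, (∀ j, 0 ≤ d j) ∧ (∀ j, d j ≠ 0 → c j ≠ 0) ∧
      ∑ j, d j • g j = ∑ j, c j • g j ∧
      (univ.filter fun j => d j ≠ 0).card < (univ.filter fun j => c j ≠ 0).card := by
  classical
  obtain ⟨j₁, hj₁⟩ := hex
  have hP : (univ.filter fun j => 0 < E j).Nonempty := ⟨j₁, by simp [hj₁]⟩
  obtain ⟨js, hjsmem, hjsmin⟩ := Finset.exists_min_image _ (fun j => c j / E j) hP
  simp only [mem_filter, mem_univ, true_and] at hjsmem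
  set t := c js / E js with ht
  have ht0 : 0 ≤ t := div_nonneg (hc _) hjsmem.le
  have hdsupp : ∀ j, (c j - t * E j) ≠ 0 → c j ≠ 0 := by
    intro j hd hcj
    have hEj : E j = 0 := by
      by_contra hE0
      exact hsupp j hE0 hcj
    rw [hcj, hEj] at hd
    simp at hd
  refine ⟨fun j => c j - t * E j, ?_, hdsupp, ?_, ?_⟩
  · intro j
    show 0 ≤ c j - t * E j
    by_cases hEj : 0 < E j
    · have h1 := hjsmin j (by simp [hEj])
      have h2 : t * E j ≤ c j := by
        rw [← le_div_iff₀ hEj]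
        exact h1
      linarith
    · push_neg at hEj
      nlinarith [hc j]
  · have h1 : ∑ j, (t * E j) • g j = t • ∑ j, E j • g j := by
      rw [Finset.smul_sum]
      exact Finset.sum_congr rfl fun j _ => (smul_smul t (E j) (g j)).symm
    simp only [sub_smul, Finset.sum_sub_distrib, h1, hE, smul_zero, sub_zero]
  · apply Finset.card_lt_card
    have hsub : (univ.filter fun j => (c j - t * E j) ≠ 0) ⊆ (univ.filter fun j => c j ≠ 0) := by
      intro j hj
      simp only [mem_filter, mem_univ, true_and] at hj ⊢
      exact hdsupp j hj
    rw [Finset.ssubset_iff_of_subset hsub]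
    refine ⟨js, ?_, ?_⟩
    · simp only [mem_filter, mem_univ, true_and]
      exact hsupp js (ne_of_gt hjsmem)
    · simp only [mem_filter, mem_univ, true_and, not_not]
      rw [ht, div_mul_cancel₀ _ (ne_of_gt hjsmem), sub_self]

lemma coneGen_reduce (g : J → H) :
    ∀ (n : ℕ) (c : J → ℝ), (univ.filter fun j => c j ≠ 0).card ≤ n → (∀ j, 0 ≤ c j) →
    ∃ d : J → ℝ, (∀ j, 0 ≤ d j) ∧ ∑ j, d j • g j = ∑ j, c j • g j ∧
      LinearIndependent ℝ (fun j : {j // d j ≠ 0} => g j) := by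
  classical
  intro n
  induction n with
  | zero =>
    intro c hcard hc
    refine ⟨c, hc, rfl, ?_⟩
    have hempty : ∀ j, ¬ c j ≠ 0 := by
      intro j hj
      have hmem : j ∈ univ.filter fun j => c j ≠ 0 := by simp [hj]
      rw [Finset.card_eq_zero.mp (Nat.le_zero.mp hcard)] at hmem
      simp at hmem
    have : IsEmpty {j // c j ≠ 0} := ⟨fun ⟨j, hj⟩ => hempty j hj⟩
    exact linearIndependent_empty_type
  | succ n ih =>
    intro c hcard hc
    by_cases hli : LinearIndependent ℝ (fun j : {j // c j ≠ 0} => g j)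
    · exact ⟨c, hc, rfl, hli⟩
    · obtain ⟨e, hesum, j₀, hj₀⟩ := Fintype.not_linearIndependent_iff.mp hli
      set E : J → ℝ := fun j => if h : c j ≠ 0 then e ⟨j, h⟩ else 0 with hEdef
      have hsupp : ∀ j, E j ≠ 0 → c j ≠ 0 := by
        intro j hj
        by_contra hcj
        exact hj (show (if h : c j ≠ 0 then e ⟨j, h⟩ else 0) = 0 from
          dif_neg (not_not_intro hcj))
      have hEsum : ∑ j, E j • g j = 0 := by
        have h1 : ∑ j ∈ univ.filter (fun j => c j ≠ 0), E j • g j = ∑ j, E j • g j := by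
          apply Finset.sum_filter_of_ne
          intro j _ hne
          apply hsupp
          intro hEj
          rw [hEj] at hne
          simp at hne
        have h2 : ∑ j ∈ univ.filter (fun j => c j ≠ 0), E j • g j
            = ∑ j : {j // c j ≠ 0}, E ↑j • g ↑j :=
          Finset.sum_subtype _ (fun j => by simp) _
        have h3 : ∑ j : {j // c j ≠ 0}, E ↑j • g ↑j = ∑ j : {j // c j ≠ 0}, e j • g ↑j := by
          apply Finset.sum_congr rfl
          intro j _
          rw [hEdef]
          simp only [dif_pos j.2]
        rw [← h1, h2, h3, hesum]
      have hEj₀ : E ↑j₀ ≠ 0 := by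
        rw [hEdef]
        simpa only [dif_pos j₀.2] using hj₀
      have hstep : ∃ d : J → ℝ, (∀ j, 0 ≤ d j) ∧ (∀ j, d j ≠ 0 → c j ≠ 0) ∧
          ∑ j, d j • g j = ∑ j, c j • g j ∧
          (univ.filter fun j => d j ≠ 0).card < (univ.filter fun j => c j ≠ 0).card := by
        by_cases hex : ∃ j, 0 < E j
        · exact shrink_support g c E hc hEsum hsupp hex
        · push_neg at hex
          refine shrink_support g c (-E) hc ?_ ?_ ?_
          · simpa using hEsum
          · intro j hj
            apply hsupp
            simpa using hj
          · refine ⟨j₀, ?_⟩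
            have := lt_of_le_of_ne (hex ↑j₀) hEj₀
            simp only [Pi.neg_apply]
            linarith
      obtain ⟨d, hd, hdsupp, hdsum, hcardlt⟩ := hstep
      obtain ⟨d', hd', hd'sum, hli'⟩ := ih d (by omega)  hd
      exact ⟨d', hd', by rw [hd'sum, hdsum], hli'⟩

lemma isClosed_coneGen [FiniteDimensional ℝ H] (g : J → H) : IsClosed (coneGen g) := by
  classical
  have main : coneGen g =
      ⋃ (s : {s : Finset J // LinearIndependent ℝ (fun j : {j // j ∈ s} => g ↑j)}),
      {x : H | ∃ c : J → ℝ, (∀ j, 0 ≤ c j) ∧ (∀ j, c j ≠ 0 → j ∈ (s : Finset J)) ∧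
        x = ∑ j, c j • g j} := by
    ext x
    simp only [Set.mem_iUnion]
    constructor
    · rintro ⟨c, hc, rfl⟩
      obtain ⟨d, hd, hsum, hli⟩ := coneGen_reduce g _ c le_rfl hc
      have hiff : ∀ j, j ∈ univ.filter (fun j => d j ≠ 0) ↔ d j ≠ 0 := fun j => by simp
      have hli2 : LinearIndependent ℝ
          (fun j : {j // j ∈ univ.filter (fun j => d j ≠ 0)} => g ↑j) := by
        have := hli.comp ((Equiv.subtypeEquivRight hiff)) (Equiv.injective _)
        exact this
      exact ⟨⟨univ.filter fun j => d j ≠ 0, hli2⟩, d, hd, fun j hj => by simp [hj], hsum.symm⟩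
    · rintro ⟨s, c, hc, _, rfl⟩
      exact ⟨c, hc, rfl⟩
  rw [main]
  apply isClosed_iUnion_of_finite
  rintro ⟨s, hs⟩
  -- the set is the image of the nonnegative orthant under an injective linear map
  set T : ({j // j ∈ s} → ℝ) →ₗ[ℝ] H :=
    { toFun := fun c => ∑ j : {j // j ∈ s}, c j • g ↑j
      map_add' := fun c d => by
        rw [← Finset.sum_add_distrib]
        exact Finset.sum_congr rfl fun j _ => add_smul _ _ _
      map_smul' := fun t c => by
        simp only [RingHom.id_apply, Finset.smul_sum]
        exact Finset.sum_congr rfl fun j _ => (smul_smul t (c j) (g ↑j)).symm } with hT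
  have himage : {x : H | ∃ c : J → ℝ, (∀ j, 0 ≤ c j) ∧ (∀ j, c j ≠ 0 → j ∈ s) ∧
      x = ∑ j, c j • g j} = T '' {c | ∀ j, 0 ≤ c j} := by
    ext x
    constructor
    · rintro ⟨c, hc, hsupp, rfl⟩
      refine ⟨fun j => c ↑j, fun j => hc ↑j, ?_⟩
      rw [hT]
      show ∑ j : {j // j ∈ s}, c ↑j • g ↑j = ∑ j, c j • g j
      rw [Finset.sum_coe_sort s (fun j => c j • g j)]
      apply Finset.sum_subset (Finset.subset_univ s)
      intro j _ hj
      have : c j = 0 := by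
        by_contra hne
        exact hj (hsupp j hne)
      simp [this]
    · rintro ⟨c, hc, rfl⟩
      refine ⟨fun j => if h : j ∈ s then c ⟨j, h⟩ else 0, ?_, ?_, ?_⟩
      · intro j
        by_cases h : j ∈ s
        · simpa [dif_pos h] using hc ⟨j, h⟩
        · simp [dif_neg h]
      · intro j hj
        by_contra h
        exact hj (dif_neg h)
      · rw [hT]
        show ∑ j : {j // j ∈ s}, c j • g ↑j = _
        rw [← Finset.sum_subset (Finset.subset_univ s)
          (fun j _ hj => by simp [dif_neg hj])]
        rw [← Finset.sum_coe_sort s (fun j => (if h : j ∈ s then c ⟨j, h⟩ else 0) • g j)]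
        apply Finset.sum_congr rfl
        intro j _
        rw [dif_pos j.2]
    -- done
  rw [himage]
  have hker : LinearMap.ker T = ⊥ := by
    rw [LinearMap.ker_eq_bot']
    intro c hc
    exact funext (Fintype.linearIndependent_iff.mp hs c hc)
  have hclosed : Topology.IsClosedEmbedding T := LinearMap.isClosedEmbedding_of_injective hker
  apply hclosed.isClosedMap
  have : {c : {j // j ∈ s} → ℝ | ∀ j, 0 ≤ c j} = ⋂ j, {c | 0 ≤ c j} := by
    ext c; simp [Set.mem_iInter]
  rw [this]
  exact isClosed_iInter fun j => isClosed_le continuous_const (continuous_apply j)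

end ConeGen

section Duality

variable {I : Type*} [Fintype I]

lemma dot_comm' (x y : I → ℝ) : dot x y = dot y x := by
  simp [dot, mul_comm]

lemma dot_neg_left (x y : I → ℝ) : dot (-x) y = - dot x y := by
  simp [dot]

lemma dot_neg_right (x y : I → ℝ) : dot x (-y) = - dot x y := by
  simp [dot]

lemma dot_smul_right (t : ℝ) (ξ v : I → ℝ) : dot ξ (t • v) = t * dot ξ v := by
  simp only [dot, Finset.mul_sum, Pi.smul_apply, smul_eq_mul]
  exact Finset.sum_congr rfl fun i _ => by ring

lemma inner_euc (x y : EuclideanSpace ℝ I) : ⟪x, y⟫_ℝ = dot x y := by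
  simp [PiLp.inner_apply, RCLike.inner_apply, dot, mul_comm]

/-- Transfer of a subspace of `I → ℝ` to `EuclideanSpace ℝ I`. -/
noncomputable def eucMap (V : Submodule ℝ (I → ℝ)) : Submodule ℝ (EuclideanSpace ℝ I) :=
  V.map ((WithLp.linearEquiv 2 ℝ (I → ℝ)).symm : (I → ℝ) →ₗ[ℝ] EuclideanSpace ℝ I)

lemma mem_eucMap {V : Submodule ℝ (I → ℝ)} {x : EuclideanSpace ℝ I} :
    x ∈ eucMap V ↔ x.ofLp ∈ V := by
  constructor
  · rintro ⟨v, hv, rfl⟩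
    exact hv
  · intro h
    exact ⟨x.ofLp, h, rfl⟩

lemma eucMap_perp (V : Submodule ℝ (I → ℝ)) : eucMap (perp V) = (eucMap V)ᗮ := by
  ext x
  rw [mem_eucMap, Submodule.mem_orthogonal]
  constructor
  · intro h u hu
    rw [mem_eucMap] at hu
    rw [inner_euc, dot_comm']
    exact h _ hu
  · intro h v hv
    have hv' : WithLp.toLp 2 v ∈ eucMap V := mem_eucMap.mpr hv
    have h2 := h _ hv'
    rw [inner_euc] at h2
    rw [dot_comm']
    exact h2

lemma perp_perp (V : Submodule ℝ (I → ℝ)) : perp (perp V) = V := by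
  have h : eucMap (perp (perp V)) = eucMap V := by
    rw [eucMap_perp, eucMap_perp, Submodule.orthogonal_orthogonal]
  exact Submodule.map_injective_of_injective
    ((WithLp.linearEquiv 2 ℝ (I → ℝ)).symm.injective) h

lemma bounded_iff_forall (V : Submodule ℝ (I → ℝ)) (ξ α : I → ℝ) :
    Bounded V ξ α ↔ ∀ v ∈ SigCone V α, dot ξ v ≤ 0 := by
  constructor
  · rintro ⟨M, hM⟩ v hv
    have key : ∀ t : ℝ, 0 ≤ t → t * dot ξ v ≤ M := by
      intro t ht
      have hmem : t • v ∈ SigCone V α := by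
        refine ⟨V.smul_mem t hv.1, fun i => ?_⟩
        have h1 := hv.2 i
        have h2 : (t • v) i = t * v i := rfl
        rw [h2, mul_left_comm]
        exact mul_nonneg ht h1
      have h3 := hM (Set.mem_image_of_mem (dot ξ) hmem)
      rwa [dot_smul_right] at h3
    have hM0 : 0 ≤ M := by have := key 0 le_rfl; linarith
    by_contra hpos
    push_neg at hpos
    have := key ((M + 1) / dot ξ v) (div_nonneg (by linarith) hpos.le)
    rw [div_mul_cancel₀ _ (ne_of_gt hpos)] at this
    linarith
  · intro h
    refine ⟨0, ?_⟩
    rintro y ⟨v, hv, rfl⟩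
    exact h v hv

lemma euc_sum_smul_apply {J' : Type*} [Fintype J'] (c : J' → ℝ)
    (f : J' → EuclideanSpace ℝ I) (i : I) :
    (∑ j, c j • f j) i = ∑ j, c j * f j i := by
  rw [WithLp.ofLp_sum, Finset.sum_apply]
  rfl

lemma gale_key (V : Submodule ℝ (I → ℝ)) (ξ α : I → ℝ) (hα : IsSign α) :
    Feasible (perp V) (-ξ) α ↔ Bounded V ξ α := by
  classical
  have hα2 : ∀ i, α i * α i = 1 := fun i => by rcases hα i with h | h <;> rw [h] <;> norm_num
  rw [bounded_iff_forall]
  constructor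
  · rintro ⟨x, hxV, hxs⟩ v hv
    have h1 : dot (x - -ξ) v = 0 := hxV v hv.1
    have h2 : 0 ≤ dot x v := by
      apply Finset.sum_nonneg
      intro i _
      have hx : (α i * x i) * (α i * v i) = x i * v i := by
        calc (α i * x i) * (α i * v i) = (α i * α i) * (x i * v i) := by ring
        _ = x i * v i := by rw [hα2 i, one_mul]
      show 0 ≤ x i * v i
      rw [← hx]
      exact mul_nonneg (hxs i) (hv.2 i)
    have h3 : dot (x - -ξ) v = dot x v + dot ξ v := by
      simp [dot, sub_neg_eq_add, add_mul, Finset.sum_add_distrib]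
    linarith
  · intro h
    by_contra hfeas
    set W : Submodule ℝ (EuclideanSpace ℝ I) := eucMap (perp V) with hW
    obtain ⟨S, hS⟩ : W.FG := IsNoetherian.noetherian W
    set g : (I ⊕ ({x // x ∈ S} ⊕ {x // x ∈ S})) → EuclideanSpace ℝ I :=
      Sum.elim (fun i => EuclideanSpace.single i (α i))
        (Sum.elim (fun p => ↑p) (fun p => -↑p)) with hg
    have hmemK : ∀ x : EuclideanSpace ℝ I, x ∈ coneGen g ↔
        ∃ y : EuclideanSpace ℝ I, (∀ i, 0 ≤ α i * y i) ∧ x - y ∈ W := by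
      intro x
      constructor
      · rintro ⟨c, hc, rfl⟩
        refine ⟨∑ i, c (Sum.inl i) • EuclideanSpace.single i (α i), ?_, ?_⟩
        · intro i
          rw [euc_sum_smul_apply]
          have hsum : ∑ i', c (Sum.inl i') * (EuclideanSpace.single i' (α i') i)
              = c (Sum.inl i) * α i := by
            rw [Finset.sum_eq_single i]
            · simp [EuclideanSpace.single_apply]
            · intro b _ hb
              simp [EuclideanSpace.single_apply, Ne.symm hb]
            · intro hmem
              exact absurd (mem_univ i) hmem
          rw [hsum]
          have := hα2 i
          nlinarith [hc (Sum.inl i)]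
        · rw [Fintype.sum_sum_type]
          have hAy : (∑ i, c (Sum.inl i) • g (Sum.inl i))
              = ∑ i, c (Sum.inl i) • EuclideanSpace.single i (α i) := rfl
          rw [hAy, add_sub_cancel_left]
          apply Submodule.sum_mem
          rintro (p | p) _
          · show c (Sum.inr (Sum.inl p)) • (↑p : EuclideanSpace ℝ I) ∈ W
            apply Submodule.smul_mem
            rw [← hS]
            exact Submodule.subset_span p.2
          · show c (Sum.inr (Sum.inr p)) • (-(↑p : EuclideanSpace ℝ I)) ∈ W
            apply Submodule.smul_mem
            rw [← hS]
            exact Submodule.neg_mem _ (Submodule.subset_span p.2)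
      · rintro ⟨y, hy, hxy⟩
        have hw := hxy
        rw [← hS, Submodule.mem_span_finset] at hw
        obtain ⟨f, -, hf⟩ := hw
        refine ⟨Sum.elim (fun i => α i * y i)
          (Sum.elim (fun p => max (f ↑p) 0) (fun p => max (-(f ↑p)) 0)), ?_, ?_⟩
        · rintro (i | p | p)
          · exact hy i
          · exact le_max_right _ _
          · exact le_max_right _ _
        · rw [Fintype.sum_sum_type, Fintype.sum_sum_type]
          simp only [Sum.elim_inl, Sum.elim_inr]
          have h1 : (∑ i, (α i * y i) • g (Sum.inl i)) = y := by
            refine PiLp.ext fun i => ?_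
            have happ : (∑ i', (α i' * y i') • g (Sum.inl i')) i
                = ∑ i', (α i' * y i') * (EuclideanSpace.single i' (α i') i) :=
              euc_sum_smul_apply _ _ i
            rw [happ, Finset.sum_eq_single i]
            · have : EuclideanSpace.single i (α i) i = α i := by
                simp [EuclideanSpace.single_apply]
              rw [this]
              calc α i * y i * α i = (α i * α i) * y i := by ring
              _ = y i := by rw [hα2 i, one_mul]
            · intro b _ hb
              simp [EuclideanSpace.single_apply, Ne.symm hb]
            · intro hmem
              exact absurd (mem_univ i) hmem
          have h2 : (∑ p : {x // x ∈ S}, (max (f ↑p) 0) • g (Sum.inr (Sum.inl p)))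
              + ∑ p : {x // x ∈ S}, (max (-(f ↑p)) 0) • g (Sum.inr (Sum.inr p)) = x - y := by
            rw [← Finset.sum_add_distrib]
            have hterm : ∀ p : {x // x ∈ S},
                (max (f ↑p) 0) • g (Sum.inr (Sum.inl p))
                  + (max (-(f ↑p)) 0) • g (Sum.inr (Sum.inr p))
                = f ↑p • (↑p : EuclideanSpace ℝ I) := by
              intro p
              show (max (f ↑p) 0) • (↑p : EuclideanSpace ℝ I)
                + (max (-(f ↑p)) 0) • (-(↑p : EuclideanSpace ℝ I)) = f ↑p • ↑p
              rw [smul_neg, ← sub_eq_add_neg, ← sub_smul]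
              congr 1
              exact max_zero_sub_eq_self (f ↑p)
            rw [Finset.sum_congr rfl (fun p _ => hterm p)]
            rw [Finset.sum_coe_sort S (fun z => f z • z)]
            exact hf
          rw [h1, h2]
          abel
    have hclosed : IsClosed (coneGen g) := isClosed_coneGen g
    set K : ConvexCone ℝ (EuclideanSpace ℝ I) :=
      { carrier := coneGen g
        smul_mem' := fun t ht _ hx => coneGen_smul g (le_of_lt ht) hx
        add_mem' := fun _ hx _ hy => coneGen_add g hx hy } with hKdef
    have hb : WithLp.toLp 2 (-ξ) ∉ K := by
      intro hmem
      obtain ⟨y, hy, hwmem⟩ := (hmemK _).mp hmem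
      apply hfeas
      refine ⟨y.ofLp, ?_, hy⟩
      have hneg := Submodule.neg_mem W hwmem
      rw [neg_sub] at hneg
      rw [hW] at hneg
      exact mem_eucMap.mp hneg
    obtain ⟨z, hz1, hz2⟩ :=
      ProperCone.hyperplane_separation' (E := EuclideanSpace ℝ I)
        ({ carrier := coneGen g
           add_mem' := fun hx hy => coneGen_add g hx hy
           zero_mem' := coneGen_zero g
           smul_mem' := fun c _ hx => coneGen_smul g c.2 hx
           isClosed' := hclosed } : ProperCone ℝ (EuclideanSpace ℝ I)) hb
    have hvV : z.ofLp ∈ V := by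
      rw [← perp_perp V]
      intro w hwperp
      have hwW : WithLp.toLp 2 w ∈ W := by
        rw [hW]; exact mem_eucMap.mpr hwperp
      have hmem1 : WithLp.toLp 2 w ∈ K :=
        (hmemK _).mpr ⟨0, fun i => by simp, by simpa using hwW⟩
      have hmem2 : WithLp.toLp 2 (-w) ∈ K :=
        (hmemK _).mpr ⟨0, fun i => by simp, by simpa using Submodule.neg_mem W hwW⟩
      have e1 := hz1 _ hmem1
      have e2 := hz1 _ hmem2
      rw [inner_euc, WithLp.ofLp_toLp] at e1 e2
      rw [dot_neg_left] at e2
      rw [dot_comm']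
      linarith
    have hsigns : ∀ i, 0 ≤ α i * z i := by
      intro i
      have hgi : g (Sum.inl i) ∈ K := coneGen_gen g (Sum.inl i)
      have hz := hz1 _ hgi
      rw [inner_euc] at hz
      have hdot : dot (EuclideanSpace.single i (α i)) z = α i * z i := by
        show (∑ i', EuclideanSpace.single i (α i) i' * z i') = α i * z i
        rw [Finset.sum_eq_single i]
        · simp [EuclideanSpace.single_apply]
        · intro b _ hb
          simp [EuclideanSpace.single_apply, hb]
        · intro hmem
          exact absurd (mem_univ i) hmem
      have hz' : (0:ℝ) ≤ dot (EuclideanSpace.single i (α i)) z := hz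
      rw [hdot] at hz'
      exact hz'
    have hfinal := h z.ofLp ⟨hvV, hsigns⟩
    rw [inner_euc, WithLp.ofLp_toLp, dot_neg_left] at hz2
    linarith

end Duality


/-- **Strong duality for Gale dual polarized arrangements.**  Let `𝒱 = (V, η, ξ)` be a
polarized arrangement with Gale dual `𝒱^∨ = (V^⊥, -ξ, -η)`.  Then a sign vector `α` is
feasible for `𝒱^∨` iff it is bounded for `𝒱`, bounded for `𝒱^∨` iff feasible for `𝒱`,
and bounded feasible for `𝒱^∨` iff bounded feasible for `𝒱`. -/
theorem gale_strong_duality (A : PolArr I) (α : I → ℝ) (hα : IsSign α) :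
    (Feasible (perp A.V) (-A.ξ) α ↔ Bounded A.V A.ξ α) ∧
    (Bounded (perp A.V) (-A.η) α ↔ Feasible A.V A.η α) ∧
    ((Feasible (perp A.V) (-A.ξ) α ∧ Bounded (perp A.V) (-A.η) α) ↔
      (Feasible A.V A.η α ∧ Bounded A.V A.ξ α)) := by
  have h1 := gale_key A.V A.ξ α hα
  have h2 := gale_key (perp A.V) (-A.η) α hα
  rw [perp_perp, neg_neg] at h2
  exact ⟨h1, h2.symm, Iff.trans (and_congr h1 h2.symm) and_comm⟩
end

section
/- An infeasible neighbor of a bounded feasible sign vector is bounded: let 𝒱 be a polarized arrangement and let α, β ∈ {+1,−1}^I differ in exactly one coordinate. If α ∉ ℱ and β ∈ 𝒫, then α ∈ ℬ (equivalently, by strong duality, α is feasible for the Gale dual 𝒱^∨). -/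
open Finset

variable {I : Type*} [Fintype I]

/-- **An infeasible neighbor of a bounded feasible sign vector is bounded.**  If `α` and
`β` differ in exactly one coordinate, `α` is infeasible, and `β` is bounded feasible,
then `α` is bounded (equivalently, feasible for the Gale dual). -/
theorem infeasible_neighbor_bounded (A : PolArr I) (α β : I → ℝ)
    (hα : IsSign α) (hβ : IsSign β) (j : I)
    (hj : α j ≠ β j) (hoff : ∀ i, i ≠ j → α i = β i)
    (hαinf : ¬ Feasible A.V A.η α)
    (hβfeas : Feasible A.V A.η β) (hβbdd : Bounded A.V A.ξ β) :
    Bounded A.V A.ξ α := by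
  have hsub : SigCone A.V α ⊆ SigCone A.V β := by
    rintro x ⟨hxV, hxs⟩
    have hxj : x j = 0 := by
      by_contra hne
      have haj : α j * x j ≠ 0 := by
        rcases hα j with h1 | h1 <;> simp [h1, hne]
      have hpos : 0 < α j * x j := lt_of_le_of_ne (hxs j) (Ne.symm haj)
      obtain ⟨y, hyV, hys⟩ := hβfeas
      apply hαinf
      set t : ℝ := |α j * y j| / (α j * x j) with ht
      have htnn : 0 ≤ t := div_nonneg (abs_nonneg _) hpos.le
      refine ⟨y + t • x, ?_, ?_⟩
      · have : (y + t • x) - A.η = (y - A.η) + t • x := by ring_nf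
        rw [this]
        exact A.V.add_mem hyV (A.V.smul_mem t hxV)
      · intro i
        by_cases hi : i = j
        · subst hi
          have : α i * (y + t • x) i = α i * y i + |α i * y i| := by
            have hx : t * (α i * x i) = |α i * y i| := by
              rw [ht]; exact div_mul_cancel₀ _ hpos.ne'
            simp only [Pi.add_apply, Pi.smul_apply, smul_eq_mul]
            nlinarith [hx]
          rw [this]
          nlinarith [abs_nonneg (α i * y i), neg_abs_le (α i * y i)]
        · have hαβ : α i = β i := hoff i hi
          have h1 : 0 ≤ β i * y i := hys i
          have h2 : 0 ≤ t * (α i * x i) := mul_nonneg htnn (hxs i)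
          simp only [Pi.add_apply, Pi.smul_apply, smul_eq_mul]
          rw [hαβ] at *
          nlinarith
    refine ⟨hxV, fun i => ?_⟩
    by_cases hi : i = j
    · subst hi; simp [hxj]
    · rw [← hoff i hi]; exact hxs i
  exact hβbdd.mono (Set.image_mono hsub)
end

section
/- Genericity of η makes the arrangement simple: let 𝒱 = (V, η, ξ) be a polarized arrangement (only condition (a) on η is needed) and let S ⊆ I satisfy H_S ≠ ∅. Then the direction space {v ∈ V : v_i = 0 for all i ∈ S} of the affine subspace H_S has dimension dim V − |S|; in particular H_S has codimension |S| in V_η and |S| ≤ dim V. -/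
open Finset

variable {I : Type*} [Fintype I]

lemma mem_zeroOn_iff {S : Set I} {x : I → ℝ} : x ∈ zeroOn S ↔ ∀ i ∈ S, x i = 0 :=
  Iff.rfl

/-- Rank-nullity lower bound: `dim V ≤ dim (V ∩ zeroOn S) + |S|`. -/
lemma aux_finrank_le (V : Submodule ℝ (I → ℝ)) (S : Finset I) :
    Module.finrank ℝ V ≤ Module.finrank ℝ ↥(V ⊓ zeroOn (↑S : Set I)) + S.card := by
  classical
  set g : V →ₗ[ℝ] (S → ℝ) :=
    (LinearMap.funLeft ℝ ℝ ((↑) : S → I)).domRestrict V with hg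
  have hker : LinearMap.ker g = (V ⊓ zeroOn (↑S : Set I)).comap V.subtype := by
    ext v
    simp only [LinearMap.mem_ker, Submodule.mem_comap, Submodule.mem_inf,
      Submodule.coe_subtype, hg, LinearMap.domRestrict_apply, LinearMap.funLeft_apply]
    constructor
    · intro h
      refine ⟨v.2, fun i hi => ?_⟩
      exact congrFun h ⟨i, hi⟩
    · intro h
      funext i
      exact h.2 i i.2
  have hkereq : Module.finrank ℝ (LinearMap.ker g) =
      Module.finrank ℝ ↥(V ⊓ zeroOn (↑S : Set I)) := by
    rw [hker]
    exact (Submodule.comapSubtypeEquivOfLe inf_le_left).finrank_eq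
  have hrange : Module.finrank ℝ (LinearMap.range g) ≤ S.card := by
    calc Module.finrank ℝ (LinearMap.range g) ≤ Module.finrank ℝ (S → ℝ) :=
          Submodule.finrank_le _
      _ = S.card := by
          rw [Module.finrank_fintype_fun_eq_card]
          simp
  have hrn := LinearMap.finrank_range_add_finrank_ker g
  omega

set_option synthInstance.maxHeartbeats 1000000 in
/-- Adding one more coordinate constraint drops the dimension by at most one. -/
lemma aux_step [DecidableEq I] (V : Submodule ℝ (I → ℝ)) (S : Finset I) (i : I) :
    Module.finrank ℝ ↥(V ⊓ zeroOn (↑S : Set I)) ≤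
      Module.finrank ℝ ↥(V ⊓ zeroOn (↑(insert i S) : Set I)) + 1 := by
  classical
  set W := V ⊓ zeroOn (↑S : Set I) with hW
  set W' := V ⊓ zeroOn (↑(insert i S) : Set I) with hW'
  have hle : W' ≤ W := by
    refine inf_le_inf_left _ fun x hx j hj => hx j ?_
    simp only [Finset.coe_insert, Set.mem_insert_iff]
    exact Or.inr hj
  set φ : W →ₗ[ℝ] ℝ := (LinearMap.proj i : (I → ℝ) →ₗ[ℝ] ℝ).domRestrict W with hφ
  have hker : LinearMap.ker φ = W'.comap W.subtype := by
    ext v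
    simp only [LinearMap.mem_ker, Submodule.mem_comap, Submodule.coe_subtype, hφ,
      LinearMap.domRestrict_apply, LinearMap.proj_apply, hW', Submodule.mem_inf]
    constructor
    · intro h
      refine ⟨v.2.1, fun j hj => ?_⟩
      rcases Finset.mem_insert.1 (Finset.mem_coe.1 hj) with rfl | hj'
      · exact h
      · exact v.2.2 j hj'
    · intro h
      exact h.2 i (by simp)
  have hkereq : Module.finrank ℝ (LinearMap.ker φ) = Module.finrank ℝ W' := by
    rw [hker]
    exact (Submodule.comapSubtypeEquivOfLe hle).finrank_eq
  have hrange : Module.finrank ℝ (LinearMap.range φ) ≤ 1 := by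
    calc Module.finrank ℝ (LinearMap.range φ) ≤ Module.finrank ℝ ℝ :=
          Submodule.finrank_le _
      _ = 1 := Module.finrank_self ℝ
  have hrn := LinearMap.finrank_range_add_finrank_ker φ
  omega

/-- Condition (a) alone bounds `|S|` by `dim V` whenever `H_S` is nonempty. -/
lemma aux_card_le (A : PolArr I) (S : Finset I) (hS : (Flat A.V A.η ↑S).Nonempty) :
    S.card ≤ Module.finrank ℝ A.V := by
  classical
  obtain ⟨p, hpV, hp0⟩ := hS
  have ha := A.cond_a p hpV
  have hsub : {i | p i ≠ 0} ⊆ (↑(Sᶜ) : Set I) := by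
    intro i hi
    simp only [Finset.coe_compl, Set.mem_compl_iff, Finset.mem_coe]
    intro hiS
    exact hi (hp0 i hiS)
  have hcard : Set.ncard {i | p i ≠ 0} ≤ Fintype.card I - S.card := by
    calc Set.ncard {i | p i ≠ 0} ≤ Set.ncard (↑(Sᶜ) : Set I) :=
          Set.ncard_le_ncard hsub (Set.toFinite _)
      _ = Sᶜ.card := Set.ncard_coe_finset _
      _ = Fintype.card I - S.card := Finset.card_compl S
  have hSI : S.card ≤ Fintype.card I := Finset.card_le_univ S
  omega

/-- The key inductive upper bound: `|S| + dim (V ∩ zeroOn S) ≤ dim V`. -/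
lemma aux_key [DecidableEq I] (A : PolArr I) : ∀ (d : ℕ) (S : Finset I),
    (Flat A.V A.η ↑S).Nonempty →
    Module.finrank ℝ ↥(A.V ⊓ zeroOn (↑S : Set I)) ≤ d →
    S.card + Module.finrank ℝ ↥(A.V ⊓ zeroOn (↑S : Set I)) ≤ Module.finrank ℝ A.V := by
  classical
  intro d
  induction d with
  | zero =>
    intro S hS hd
    have := aux_card_le A S hS
    omega
  | succ d ih =>
    intro S hS hd
    by_cases hcase : Module.finrank ℝ ↥(A.V ⊓ zeroOn (↑S : Set I)) ≤ d
    · exact ih S hS hcase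
    · have hpos : 0 < Module.finrank ℝ ↥(A.V ⊓ zeroOn (↑S : Set I)) := by omega
      set W := A.V ⊓ zeroOn (↑S : Set I) with hWdef
      have hWne : W ≠ ⊥ := by
        intro h
        rw [h] at hpos
        simp at hpos
      obtain ⟨w, hwW, hwne⟩ := Submodule.exists_mem_ne_zero_of_ne_bot hWne
      obtain ⟨i, hwi⟩ : ∃ i, w i ≠ 0 := by
        by_contra h
        push_neg at h
        exact hwne (funext h)
      have hwV : w ∈ A.V := hwW.1
      have hwZ : ∀ j ∈ S, w j = 0 := fun j hj => hwW.2 j (Finset.mem_coe.2 hj)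
      have hiS : i ∉ S := fun h => hwi (hwZ i h)
      obtain ⟨p, hpV, hp0⟩ := hS
      set q : I → ℝ := p - (p i / w i) • w with hq
      have hqFlat : q ∈ Flat A.V A.η ↑(insert i S) := by
        constructor
        · have : q - A.η = (p - A.η) - (p i / w i) • w := by
            funext j
            simp [hq]
            ring
          rw [this]
          exact sub_mem hpV (Submodule.smul_mem _ _ hwV)
        · intro j hj
          rcases Finset.mem_insert.1 (Finset.mem_coe.1 hj) with rfl | hj'
          · simp only [hq, Pi.sub_apply, Pi.smul_apply, smul_eq_mul]
            field_simp
            ring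
          · simp [hq, hp0 j hj', hwZ j hj']
      have hstep := aux_step A.V S i
      rw [← hWdef] at hstep
      have hlt : Module.finrank ℝ ↥(A.V ⊓ zeroOn (↑(insert i S) : Set I)) <
          Module.finrank ℝ W := by
        apply Submodule.finrank_lt_finrank_of_lt
        refine lt_of_le_of_ne ?_ ?_
        · refine inf_le_inf_left _ fun x hx j hj => hx j ?_
          simp only [Finset.coe_insert, Set.mem_insert_iff]
          exact Or.inr hj
        · intro h
          have : w ∈ A.V ⊓ zeroOn (↑(insert i S) : Set I) := h ▸ hwW
          exact hwi (this.2 i (by simp))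
      have hih := ih (insert i S) ⟨q, hqFlat⟩ (by omega)
      rw [Finset.card_insert_of_notMem hiS] at hih
      omega

/-- **Genericity of `η` makes the arrangement simple.**  If `H_S ≠ ∅`, then the
direction space `{v ∈ V : v_i = 0 for all i ∈ S}` of the affine subspace `H_S` has
dimension `dim V - |S|`; in particular `|S| ≤ dim V`. -/
theorem flat_codim (A : PolArr I) (S : Finset I) (hS : (Flat A.V A.η ↑S).Nonempty) :
    Module.finrank ℝ ↥(A.V ⊓ zeroOn (↑S : Set I)) = Module.finrank ℝ A.V - S.card ∧
    S.card ≤ Module.finrank ℝ A.V := by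
  classical
  have hkey := aux_key A (Module.finrank ℝ ↥(A.V ⊓ zeroOn (↑S : Set I))) S hS le_rfl
  have hlow := aux_finrank_le A.V S
  constructor
  · omega
  · exact aux_card_le A S hS
end
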